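/- Let λ ∈ P_+ and let (·,·) be the polarization on the irreducible highest weight module V(λ) with (y_λ, y_λ) = 1. For x₀, y₀ ∈ Ker e_i with x₀ ∈ V(λ)_{μ+(n+1)α_i}, y₀ ∈ V(λ)_{μ+mα_i}, one has (f_i^{(n+1)}x₀, f_i^{(m)}y₀) = δ_{n+1,m} · v_i^{m(⟨h_i,μ⟩+m)} · [⟨h_i,μ⟩+2m choose m]_{v_i} · (x₀, y₀), where μ = λ + ξ. In particular distinct i-strings are orthogonal, and the scalar lies in 1 + v·A when ⟨h_i,μ⟩+m ≥ m ≥ 0, where A is the ring of rational functions regular at v = 0. -/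

import Mathlib

/- STATEMENT 17: For the polarization on V(λ): for x₀, y₀ ∈ Ker e_i with
x₀ ∈ V(λ)_{μ+(n+1)α_i}, y₀ ∈ V(λ)_{μ+mα_i} (μ = λ+ξ),
(f_i^{(n+1)}x₀, f_i^{(m)}y₀) = δ_{n+1,m} v_i^{m(⟨h_i,μ⟩+m)} [⟨h_i,μ⟩+2m choose m]_{v_i} (x₀,y₀).
In particular distinct i-strings are orthogonal, and when ⟨h_i,μ⟩ ≥ 0 the scalar lies in
1 + v·A, where A ⊂ ℚ(v,t) is the ring of rational functions regular at v = 0.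

We formalize inside a module M with the actions E, F, Kk, Kk'^{-1}, … of e_i, f_i, k_i,
k_i'^{-1}, …; h = ⟨h_i,μ⟩; s is the t-part of the weight of x₀ and y₀; v_i = v^{d_i}. -/

noncomputable section

/-- The field ℚ(t). -/
abbrev FF : Type := RatFunc ℚ
/-- The field ℚ(v,t) = ℚ(t)(v). -/
abbrev KK : Type := RatFunc FF
/-- The variable v. -/
def vv : KK := RatFunc.X
/-- The local ring A ⊂ ℚ(v,t) of rational functions without pole at v = 0. -/
def Aset : Set KK := {x | ∃ p q : Polynomial FF, Polynomial.eval 0 q ≠ 0 ∧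
  x * algebraMap (Polynomial FF) KK q = algebraMap (Polynomial FF) KK p}

/-- The quantum integer [n]_v. -/
def qnum (v : KK) (n : ℕ) : KK := (v ^ n - (v⁻¹) ^ n) / (v - v⁻¹)
/-- The quantum factorial [n]_v!. -/
def qfac (v : KK) (n : ℕ) : KK := ∏ r ∈ Finset.Icc 1 n, qnum v r
/-- The quantum binomial [x choose ν]_v with integer top. -/
def gqbinom (v : KK) (x : ℤ) (ν : ℕ) : KK :=
  ∏ r ∈ Finset.Icc 1 ν, (v ^ (x - r + 1) - v ^ (-(x - r + 1))) / (v ^ (r : ℤ) - v ^ (-(r : ℤ)))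

set_option maxHeartbeats 1000000
set_option synthInstance.maxHeartbeats 400000

def Qn (q : KK) (e : ℤ) : KK := (q ^ e - q ^ (-e)) / (q - q⁻¹)

lemma vv_ne_zero : (vv : KK) ≠ 0 := RatFunc.X_ne_zero

lemma vv_pow_ne_one {k : ℕ} (hk : k ≠ 0) : (vv : KK) ^ k ≠ 1 := by
  intro hcon
  have : (Polynomial.X : Polynomial FF) ^ k = 1 := by
    apply RatFunc.algebraMap_injective FF
    rw [map_pow, map_one, RatFunc.algebraMap_X]
    exact hcon
  have h0 := congrArg (fun p => Polynomial.coeff p 0) this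
  simp [Polynomial.coeff_X_pow, (Ne.symm hk)] at h0

lemma q_zpow_ne_one {di : ℕ} (hdi : 1 ≤ di) {e : ℤ} (he : e ≠ 0) :
    ((vv : KK) ^ di) ^ e ≠ 1 := by
  have key : ∀ e : ℤ, 0 < e → ((vv : KK) ^ di) ^ e ≠ 1 := by
    intro e he
    have : ((vv : KK) ^ di) ^ e = vv ^ (di * e.toNat) := by
      conv_lhs => rw [show e = ((e.toNat : ℕ) : ℤ) by omega]
      rw [zpow_natCast, ← pow_mul]
    rw [this]
    exact vv_pow_ne_one (by
      have : e.toNat ≠ 0 := by omega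
      positivity)
  rcases lt_trichotomy e 0 with h | h | h
  · intro hcon
    have hq : ((vv : KK) ^ di) ≠ 0 := pow_ne_zero _ vv_ne_zero
    have : ((vv : KK) ^ di) ^ (-e) = 1 := by
      rw [zpow_neg, hcon, inv_one]
    exact key (-e) (by omega) this
  · exact absurd h he
  · exact key e h

lemma frac_comb (x y z x' y' D : KK) (hD : D ≠ 0) (key : x*y + z*D = x'*y') :
    x/D * (y/D) + z/D = x'/D * (y'/D) := by
  rw [div_mul_div_comm, div_mul_div_comm, ← key]
  field_simp

section Qlemmas
variable {q : KK} (hq : q ≠ 0) (hq1 : ∀ e : ℤ, e ≠ 0 → q ^ e ≠ 1)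
include hq hq1

lemma sub_inv_ne_zero : q - q⁻¹ ≠ 0 := by
  intro hcon
  apply hq1 2 (by norm_num)
  have heq : q = q⁻¹ := by linear_combination hcon
  have h2 : q * q = 1 := by
    nth_rewrite 2 [heq]
    exact mul_inv_cancel₀ hq
  rw [show (2:ℤ) = 1 + 1 by norm_num, zpow_add₀ hq, zpow_one, h2]

lemma Qn_ne_zero {e : ℤ} (he : e ≠ 0) : Qn q e ≠ 0 := by
  have hnum : q ^ e - q ^ (-e) ≠ 0 := by
    intro hcon
    apply hq1 (2*e) (by omega)
    have hee : q ^ e = q ^ (-e) := by linear_combination hcon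
    calc q ^ (2*e) = q ^ e * q ^ e := by rw [show 2*e = e + e by ring, zpow_add₀ hq]
      _ = q ^ (-e) * q ^ e := by rw [hee]
      _ = 1 := by rw [← zpow_add₀ hq]; simp
  exact div_ne_zero hnum (sub_inv_ne_zero hq hq1)

lemma Qn_one : Qn q 1 = 1 := by
  rw [Qn, zpow_one, zpow_neg, zpow_one, div_self (sub_inv_ne_zero hq hq1)]

lemma qn_identity (w c : ℤ) :
    Qn q c * Qn q (w - c + 1) + Qn q (w - 2*c) = Qn q (c+1) * Qn q (w - c) := by
  have ha : q ^ w ≠ 0 := zpow_ne_zero _ hq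
  have hb : q ^ c ≠ 0 := zpow_ne_zero _ hq
  have hd : q - q⁻¹ ≠ 0 := sub_inv_ne_zero hq hq1
  have r1 : q ^ (w - c + 1) = q ^ w * q / q ^ c := by
    rw [show w - c + 1 = w + 1 - c by ring, zpow_sub₀ hq, zpow_add₀ hq, zpow_one]
  have r1' : q ^ (-(w - c + 1)) = q ^ c / (q ^ w * q) := by rw [zpow_neg, r1, inv_div]
  have r2 : q ^ (w - 2*c) = q ^ w / (q ^ c * q ^ c) := by
    rw [zpow_sub₀ hq, show 2*c = c + c by ring, zpow_add₀ hq]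
  have r2' : q ^ (-(w - 2*c)) = q ^ c * q ^ c / q ^ w := by rw [zpow_neg, r2, inv_div]
  have r3 : q ^ (c + 1) = q ^ c * q := by rw [zpow_add₀ hq, zpow_one]
  have r3' : q ^ (-(c+1)) = 1/(q ^ c * q) := by rw [zpow_neg, r3, one_div]
  have r4 : q ^ (w - c) = q ^ w / q ^ c := zpow_sub₀ hq w c
  have r4' : q ^ (-(w - c)) = q ^ c / q ^ w := by rw [zpow_neg, r4, inv_div]
  have rc' : q ^ (-c) = 1/(q ^ c) := by rw [zpow_neg, one_div]
  rw [Qn, Qn, Qn, Qn, Qn, r1, r1', r2, r2', r3, r3', r4, r4', rc']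
  refine frac_comb _ _ _ _ _ _ hd ?_
  field_simp
  ring

omit hq hq1 in
lemma Icc_prod_eq (f : ℕ → KK) (m : ℕ) :
    ∏ r ∈ Finset.Icc 1 m, f r = ∏ b ∈ Finset.range m, f (b+1) := by
  rw [← Finset.Ico_add_one_right_eq_Icc, Finset.prod_Ico_eq_prod_range]
  simp [add_comm]

omit hq1 in
lemma prod_zpow_sum (s : Finset ℕ) (g : ℕ → ℤ) :
    ∏ r ∈ s, q ^ g r = q ^ (∑ r ∈ s, g r) := by
  classical
  induction s using Finset.induction_on with
  | empty => simp
  | insert _ _ hx ih =>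
    rw [Finset.prod_insert hx, Finset.sum_insert hx, zpow_add₀ hq, ih]

omit hq hq1 in
lemma sum_range_lin (w : ℤ) (m : ℕ) :
    ∑ b ∈ Finset.range m, (w - 2*(b:ℤ) - 1) = m * (w - m) := by
  induction m with
  | zero => simp
  | succ k ih =>
    rw [Finset.sum_range_succ, ih]
    push_cast
    ring

omit hq hq1 in
lemma sum_Icc_lin (w : ℤ) (m : ℕ) :
    ∑ r ∈ Finset.Icc 1 m, (2*(r:ℤ) - w - 1) = m * (m - w) := by
  induction m with
  | zero => simp
  | succ k ih =>
    rw [Finset.sum_Icc_succ_top (by omega), ih]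
    push_cast
    ring

omit hq hq1 in
lemma qnum_eq (r : ℕ) : qnum q r = Qn q r := by
  rw [qnum, Qn, zpow_natCast, zpow_neg, zpow_natCast, inv_pow]

omit hq hq1 in
lemma qfac_eq (m : ℕ) : qfac q m = ∏ b ∈ Finset.range m, Qn q (b+1) := by
  rw [qfac, Icc_prod_eq]
  exact Finset.prod_congr rfl fun b _ => by rw [qnum_eq]; push_cast; ring_nf

lemma qfac_ne_zero (m : ℕ) : qfac q m ≠ 0 := by
  rw [qfac_eq]
  rw [Finset.prod_ne_zero_iff]
  intro b _
  exact Qn_ne_zero hq hq1 (by omega)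

lemma qpow_sub_ne {e : ℤ} (he : e ≠ 0) : q ^ e - q ^ (-e) ≠ 0 := by
  have := Qn_ne_zero hq hq1 he
  rw [Qn, div_ne_zero_iff] at this
  exact this.1

lemma Qn_div (a r : ℤ) :
    (q ^ a - q ^ (-a)) / (q ^ r - q ^ (-r)) = Qn q a / Qn q r := by
  rw [Qn, Qn, div_div_div_cancel_right₀ (sub_inv_ne_zero hq hq1)]

lemma gqbinom_eq (x : ℤ) (m : ℕ) :
    gqbinom q x m = (∏ b ∈ Finset.range m, Qn q (x - b)) / qfac q m := by
  rw [gqbinom]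
  have : ∀ r ∈ Finset.Icc 1 m,
      (q ^ (x - r + 1) - q ^ (-(x - r + 1))) / (q ^ (r:ℤ) - q ^ (-(r:ℤ)))
      = Qn q (x - r + 1) / Qn q r := fun r _ => Qn_div hq hq1 _ _
  rw [Finset.prod_congr rfl this, Finset.prod_div_distrib]
  congr 1
  · rw [Icc_prod_eq]
    exact Finset.prod_congr rfl fun b _ => by push_cast; ring_nf
  · rw [qfac_eq, Icc_prod_eq]
    exact Finset.prod_congr rfl fun b _ => by norm_cast

def Cp (q : KK) (w : ℤ) (k : ℕ) : KK :=
  ∏ b ∈ Finset.range k, (q ^ (w - 2*(b:ℤ) - 1) * Qn q ((b:ℤ)+1) * Qn q (w - b))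

lemma Cp_eq (w : ℤ) (m : ℕ) :
    Cp q w m = q ^ ((m:ℤ)*(w-m)) * (∏ b ∈ Finset.range m, Qn q (w - b)) * qfac q m := by
  rw [Cp, Finset.prod_mul_distrib, Finset.prod_mul_distrib, prod_zpow_sum hq,
    sum_range_lin, qfac_eq]
  ring

lemma main_scalar (w : ℤ) (m : ℕ) :
    (qfac q m)⁻¹ * (qfac q m)⁻¹ * Cp q w m = q ^ ((m:ℤ)*(w-m)) * gqbinom q w m := by
  have hf : qfac q m ≠ 0 := qfac_ne_zero hq hq1 m
  rw [Cp_eq hq hq1, gqbinom_eq hq hq1]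
  set A := q ^ ((m:ℤ)*(w-m))
  set P := ∏ b ∈ Finset.range m, Qn q (w - (b:ℤ))
  set f := qfac q m
  calc f⁻¹ * f⁻¹ * (A * P * f) = A * P * f⁻¹ * (f⁻¹ * f) := by ring
    _ = A * (P * f⁻¹) := by rw [inv_mul_cancel₀ hf]; ring
    _ = A * (P / f) := by rw [div_eq_mul_inv]

omit hq in
lemma one_sub_qpow_ne {e : ℤ} (he : e ≠ 0) : 1 - q ^ e ≠ 0 := by
  intro hcon
  exact hq1 e he (by linear_combination -hcon)

lemma fac_eq2 (a r : ℤ) (hr : r ≠ 0) :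
    (q ^ a - q ^ (-a)) / (q ^ r - q ^ (-r))
      = q ^ (r - a) * ((1 - q ^ (2*a)) / (1 - q ^ (2*r))) := by
  have hden : q ^ r - q ^ (-r) ≠ 0 := qpow_sub_ne hq hq1 hr
  have h2r : 1 - q ^ (2*r) ≠ 0 := one_sub_qpow_ne hq1 (by omega)
  have hA : q ^ a ≠ 0 := zpow_ne_zero _ hq
  have hR : q ^ r ≠ 0 := zpow_ne_zero _ hq
  have ra : q ^ (-a) = 1 / q ^ a := by rw [zpow_neg, one_div]
  have rb : q ^ (2*a) = q ^ a * q ^ a := by rw [show 2*a = a + a by ring, zpow_add₀ hq]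
  have rc : q ^ (r - a) = q ^ r / q ^ a := zpow_sub₀ hq r a
  have rd : q ^ (-r) = 1 / q ^ r := by rw [zpow_neg, one_div]
  have re : q ^ (2*r) = q ^ r * q ^ r := by rw [show 2*r = r + r by ring, zpow_add₀ hq]
  rw [ra, rb, rc, rd, re, mul_div_assoc',
    div_eq_div_iff (by rw [← rd]; exact hden) (by rw [← re]; exact h2r)]
  field_simp
  ring

lemma gq_T (w : ℤ) (m : ℕ) :
    q ^ ((m:ℤ)*(w-m)) * gqbinom q w m
      = ∏ r ∈ Finset.Icc 1 m, ((1 - q ^ (2*(w - r + 1))) / (1 - q ^ (2*(r:ℤ)))) := by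
  rw [gqbinom]
  have hstep : ∀ r ∈ Finset.Icc 1 m,
      (q ^ (w - r + 1) - q ^ (-(w - r + 1))) / (q ^ (r:ℤ) - q ^ (-(r:ℤ)))
      = q ^ ((r:ℤ) - (w - r + 1)) * ((1 - q ^ (2*(w - r + 1))) / (1 - q ^ (2*(r:ℤ)))) := by
    intro r hr
    rw [Finset.mem_Icc] at hr
    exact fac_eq2 hq hq1 _ _ (by omega)
  rw [Finset.prod_congr rfl hstep, Finset.prod_mul_distrib, prod_zpow_sum hq]
  have hsum : (∑ r ∈ Finset.Icc 1 m, ((r:ℤ) - (w - r + 1))) = m * (m - w) := by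
    rw [← sum_Icc_lin w m]
    exact Finset.sum_congr rfl fun r _ => by ring
  rw [hsum, ← mul_assoc, ← zpow_add₀ hq]
  rw [show (m:ℤ)*(w-m) + (m:ℤ)*((m:ℤ)-w) = 0 by ring, zpow_zero, one_mul]

end Qlemmas

lemma part2 (di : ℕ) (hdi : 1 ≤ di) (h : ℤ) (hh : 0 ≤ h) (m : ℕ) :
    ∃ c ∈ Aset, ((vv:KK) ^ di) ^ ((m:ℤ) * (h + m)) * gqbinom ((vv:KK) ^ di) (h + 2*m) m
      = 1 + vv * c := by
  set q : KK := (vv:KK) ^ di with hqdef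
  have hq : q ≠ 0 := pow_ne_zero _ vv_ne_zero
  have hq1 : ∀ e : ℤ, e ≠ 0 → q ^ e ≠ 1 := fun e he => q_zpow_ne_one hdi he
  set w : ℤ := h + 2*m with hwdef
  have hT : q ^ ((m:ℤ) * (h + m)) * gqbinom q w m
      = ∏ r ∈ Finset.Icc 1 m, ((1 - q ^ (2*(w - r + 1))) / (1 - q ^ (2*(r:ℤ)))) := by
    rw [show (m:ℤ) * (h + m) = (m:ℤ) * (w - m) by rw [hwdef]; push_cast; ring]
    exact gq_T hq hq1 w m
  -- polynomial representation
  set na : ℕ → ℕ := fun r => di * (2*(w - r + 1)).toNat with hna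
  set nb : ℕ → ℕ := fun r => di * (2*r) with hnb
  set N : Polynomial FF := ∏ r ∈ Finset.Icc 1 m, (1 - Polynomial.X ^ na r) with hN
  set D : Polynomial FF := ∏ r ∈ Finset.Icc 1 m, (1 - Polynomial.X ^ nb r) with hD
  have hmap : ∀ k : ℕ, algebraMap (Polynomial FF) KK (1 - Polynomial.X ^ k)
      = 1 - (vv:KK) ^ k := by
    intro k
    rw [map_sub, map_one, map_pow, vv]
    rw [RatFunc.algebraMap_X]
  have hfac : ∀ r ∈ Finset.Icc 1 m,
      (1 - q ^ (2*(w - r + 1))) / (1 - q ^ (2*(r:ℤ)))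
      = algebraMap (Polynomial FF) KK (1 - Polynomial.X ^ na r)
        / algebraMap (Polynomial FF) KK (1 - Polynomial.X ^ nb r) := by
    intro r hr
    rw [Finset.mem_Icc] at hr
    have e1 : q ^ (2*(w - r + 1)) = (vv:KK) ^ na r := by
      rw [show 2*(w - (r:ℤ) + 1) = (((2*(w - (r:ℤ) + 1)).toNat : ℕ) : ℤ) by
        rw [Int.toNat_of_nonneg]; omega, zpow_natCast, hqdef, ← pow_mul]
    have e2 : q ^ (2*(r:ℤ)) = (vv:KK) ^ nb r := by
      rw [show 2*(r:ℤ) = (((2*r : ℕ) : ℤ)) by push_cast; ring, zpow_natCast, hqdef, ← pow_mul]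
    rw [e1, e2, hmap, hmap]
  have hTND : q ^ ((m:ℤ) * (h + m)) * gqbinom q w m
      = algebraMap (Polynomial FF) KK N / algebraMap (Polynomial FF) KK D := by
    rw [hT, Finset.prod_congr rfl hfac, Finset.prod_div_distrib, ← map_prod, ← map_prod]
  have hevalN : Polynomial.eval 0 N = 1 := by
    rw [hN, Polynomial.eval_prod]
    apply Finset.prod_eq_one
    intro r hr
    rw [Finset.mem_Icc] at hr
    have : na r ≠ 0 := by
      have : (2*(w - (r:ℤ) + 1)).toNat ≠ 0 := by omega
      simp [hna]
      omega
    simp [Polynomial.eval_pow, zero_pow this]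
  have hevalD : Polynomial.eval 0 D = 1 := by
    rw [hD, Polynomial.eval_prod]
    apply Finset.prod_eq_one
    intro r hr
    rw [Finset.mem_Icc] at hr
    have : nb r ≠ 0 := by simp [hnb]; omega
    simp [Polynomial.eval_pow, zero_pow this]
  have hDne : algebraMap (Polynomial FF) KK D ≠ 0 := by
    rw [map_ne_zero_iff _ (RatFunc.algebraMap_injective FF)]
    intro hcon
    rw [hcon] at hevalD
    simp at hevalD
  have hXdvd : Polynomial.X ∣ (N - D) := by
    rw [Polynomial.X_dvd_iff, Polynomial.coeff_zero_eq_eval_zero, Polynomial.eval_sub,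
      hevalN, hevalD, sub_self]
  obtain ⟨P, hP⟩ := hXdvd
  refine ⟨algebraMap (Polynomial FF) KK P / algebraMap (Polynomial FF) KK D, ?_, ?_⟩
  · refine ⟨P, D, by rw [hevalD]; norm_num, ?_⟩
    rw [div_mul_cancel₀ _ hDne]
  · rw [hTND]
    have hvv : (vv:KK) = algebraMap (Polynomial FF) KK Polynomial.X :=
      (RatFunc.algebraMap_X).symm
    rw [hvv, mul_div_assoc', ← map_mul, ← hP, map_sub]
    rw [sub_div, div_self hDne]
    ring

section ModLemmas
variable {M : Type*} [AddCommGroup M] [Module KK M]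
variable {q s : KK} (hq : q ≠ 0) (hq1 : ∀ e : ℤ, e ≠ 0 → q ^ e ≠ 1) (hs : s ≠ 0)
variable {E F Kk Kk' Kk'inv : Module.End KK M}
variable (hEF : E * F - F * E = (q - q⁻¹)⁻¹ • (Kk - Kk'))
variable (hKF : Kk * F = (q ^ (-2 : ℤ)) • (F * Kk))
variable (hK'F : Kk' * F = (q ^ (2 : ℤ)) • (F * Kk'))
variable (hK'inv : Kk'inv * Kk' = 1)

lemma Fpow_succ (u : M) (b : ℕ) : (F ^ (b+1)) u = F ((F ^ b) u) := by
  rw [pow_succ']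
  rfl

include hq hKF in
lemma wtK (z : M) (w : ℤ) (hz : Kk z = (q ^ w * s) • z) :
    ∀ b : ℕ, Kk ((F ^ b) z) = (q ^ (w - 2*(b:ℤ)) * s) • (F ^ b) z := by
  intro b
  induction b with
  | zero => simpa using hz
  | succ k ih =>
    have h1 : Kk ((F ^ (k+1)) z) = (Kk * F) ((F ^ k) z) := by rw [Fpow_succ]; rfl
    rw [h1, hKF]
    show (q ^ (-2:ℤ)) • F (Kk ((F ^ k) z)) = _
    rw [ih, map_smul, smul_smul, ← Fpow_succ]
    congr 1
    rw [← mul_assoc, ← zpow_add₀ hq]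
    congr 2
    push_cast
    ring

include hq hK'F in
lemma wtK' (z : M) (w : ℤ) (hz : Kk' z = (q ^ (-w) * s) • z) :
    ∀ b : ℕ, Kk' ((F ^ b) z) = (q ^ (-(w - 2*(b:ℤ))) * s) • (F ^ b) z := by
  intro b
  induction b with
  | zero => simpa using hz
  | succ k ih =>
    have h1 : Kk' ((F ^ (k+1)) z) = (Kk' * F) ((F ^ k) z) := by rw [Fpow_succ]; rfl
    rw [h1, hK'F]
    show (q ^ (2:ℤ)) • F (Kk' ((F ^ k) z)) = _
    rw [ih, map_smul, smul_smul, ← Fpow_succ]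
    congr 1
    rw [← mul_assoc, ← zpow_add₀ hq]
    congr 2
    push_cast
    ring

include hq hq1 hEF hKF hK'F in
lemma EFb (z : M) (w : ℤ) (hEz : E z = 0)
    (hKz : Kk z = (q ^ w * s) • z) (hK'z : Kk' z = (q ^ (-w) * s) • z) :
    ∀ b : ℕ, E ((F ^ (b+1)) z)
      = (s * Qn q ((b:ℤ)+1) * Qn q (w - b)) • (F ^ b) z := by
  have hEF' : E * F = F * E + (q - q⁻¹)⁻¹ • (Kk - Kk') := by rw [← hEF]; abel
  intro b
  induction b with
  | zero =>
    have h1 : E ((F ^ 1) z) = (E * F) z := by rw [pow_one]; rfl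
    rw [h1, hEF']
    show F (E z) + (q - q⁻¹)⁻¹ • (Kk z - Kk' z) = _
    rw [hEz, map_zero, zero_add, hKz, hK'z, ← sub_smul, smul_smul]
    simp only [pow_zero, Module.End.one_apply]
    congr 1
    rw [show ((0:ℕ):ℤ) + 1 = 1 by norm_num, Qn_one hq hq1, Qn,
      show w - ((0:ℕ):ℤ) = w by push_cast; ring, div_eq_mul_inv]
    ring
  | succ k ih =>
    have h1 : E ((F ^ (k+2)) z) = (E * F) ((F ^ (k+1)) z) := by rw [Fpow_succ]; rfl
    rw [h1, hEF']
    show F (E ((F ^ (k+1)) z))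
        + (q - q⁻¹)⁻¹ • (Kk ((F ^ (k+1)) z) - Kk' ((F ^ (k+1)) z)) = _
    rw [ih, map_smul, wtK hq hKF z w hKz (k+1), wtK' hq hK'F z w hK'z (k+1),
      ← sub_smul, smul_smul, ← Fpow_succ, ← add_smul]
    congr 1
    have key := qn_identity hq hq1 w ((k:ℤ)+1)
    have hQ : (q - q⁻¹)⁻¹ * (q ^ (w - 2*(((k+1):ℕ):ℤ)) * s - q ^ (-(w - 2*(((k+1):ℕ):ℤ))) * s)
        = s * Qn q (w - 2*((k:ℤ)+1)) := by
      rw [Qn, show w - 2*((k:ℤ)+1) = w - 2*(((k+1):ℕ):ℤ) by push_cast; ring,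
        div_eq_mul_inv]
      ring
    rw [hQ]
    have e1 : s * Qn q ((k:ℤ)+1) * Qn q (w - (k:ℤ)) + s * Qn q (w - 2*((k:ℤ)+1))
        = s * (Qn q ((k:ℤ)+1) * Qn q (w - ((k:ℤ)+1) + 1) + Qn q (w - 2*((k:ℤ)+1))) := by
      rw [show w - ((k:ℤ)+1) + 1 = w - (k:ℤ) by ring]
      ring
    rw [e1, key]
    push_cast
    ring

end ModLemmas

section BLemmas
variable {M : Type*} [AddCommGroup M] [Module KK M]
variable {q s : KK} (hq : q ≠ 0) (hq1 : ∀ e : ℤ, e ≠ 0 → q ^ e ≠ 1) (hs : s ≠ 0)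
variable {E F Kk Kk' Kk'inv : Module.End KK M}
variable (hEF : E * F - F * E = (q - q⁻¹)⁻¹ • (Kk - Kk'))
variable (hKF : Kk * F = (q ^ (-2 : ℤ)) • (F * Kk))
variable (hK'F : Kk' * F = (q ^ (2 : ℤ)) • (F * Kk'))
variable (hK'inv : Kk'inv * Kk' = 1)
variable (B : M →ₗ[KK] M →ₗ[KK] KK)
variable (hBF : ∀ x y, B (F x) y = q⁻¹ * B x (Kk'inv (E y)))

include hK'inv in
lemma K'inv_eig (u : M) (lam : KK) (hlam : lam ≠ 0) (hu : Kk' u = lam • u) :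
    Kk'inv u = lam⁻¹ • u := by
  have h0 : Kk'inv (Kk' u) = u := by
    have := congrArg (fun (T : Module.End KK M) => T u) hK'inv
    simpa using this
  rw [hu, map_smul] at h0
  calc Kk'inv u = lam⁻¹ • (lam • Kk'inv u) := by
        rw [smul_smul, inv_mul_cancel₀ hlam, one_smul]
    _ = lam⁻¹ • u := by rw [h0]

include hBF in
lemma redzero (z : M) (hEz : E z = 0) (u : M) : B (F u) z = 0 := by
  rw [hBF, hEz, map_zero, map_zero, mul_zero]

include hq hq1 hs hEF hKF hK'F hK'inv hBF in
lemma red (z : M) (w : ℤ) (hEz : E z = 0)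
    (hKz : Kk z = (q ^ w * s) • z) (hK'z : Kk' z = (q ^ (-w) * s) • z)
    (u : M) (b : ℕ) :
    B (F u) ((F ^ (b+1)) z)
      = (q ^ (w - 2*(b:ℤ) - 1) * Qn q ((b:ℤ)+1) * Qn q (w - b)) * B u ((F ^ b) z) := by
  have hlam : (q ^ (-(w - 2*(b:ℤ))) * s) ≠ 0 := mul_ne_zero (zpow_ne_zero _ hq) hs
  rw [hBF, EFb hq hq1 hEF hKF hK'F z w hEz hKz hK'z b, map_smul,
    K'inv_eig hK'inv _ _ hlam (wtK' hq hK'F z w hK'z b), smul_smul, map_smul, smul_eq_mul]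
  have hsc : q⁻¹ * (s * Qn q ((b:ℤ)+1) * Qn q (w - b) * (q ^ (-(w - 2*(b:ℤ))) * s)⁻¹)
      = q ^ (w - 2*(b:ℤ) - 1) * Qn q ((b:ℤ)+1) * Qn q (w - b) := by
    rw [mul_inv, ← zpow_neg, neg_neg]
    have h1 : q⁻¹ * q ^ (w - 2*(b:ℤ)) = q ^ (w - 2*(b:ℤ) - 1) := by
      rw [← zpow_neg_one, ← zpow_add₀ hq]
      congr 1
      ring
    calc q⁻¹ * (s * Qn q ((b:ℤ)+1) * Qn q (w - b) * (q ^ (w - 2*(b:ℤ)) * s⁻¹))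
        = (q⁻¹ * q ^ (w - 2*(b:ℤ))) * Qn q ((b:ℤ)+1) * Qn q (w - b) * (s * s⁻¹) := by ring
      _ = _ := by rw [h1, mul_inv_cancel₀ hs, mul_one]
  rw [← mul_assoc, hsc]

include hq hq1 hs hEF hKF hK'F hK'inv hBF in
lemma offdiag (z : M) (w : ℤ) (hEz : E z = 0)
    (hKz : Kk z = (q ^ w * s) • z) (hK'z : Kk' z = (q ^ (-w) * s) • z) :
    ∀ (b a : ℕ) (x : M), b < a → B ((F ^ a) x) ((F ^ b) z) = 0 := by
  intro b
  induction b with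
  | zero =>
    intro a x hba
    obtain ⟨a', rfl⟩ : ∃ a', a = a' + 1 := ⟨a - 1, by omega⟩
    rw [Fpow_succ]
    simpa using redzero B hBF z hEz ((F ^ a') x)
  | succ k ih =>
    intro a x hba
    obtain ⟨a', rfl⟩ : ∃ a', a = a' + 1 := ⟨a - 1, by omega⟩
    rw [Fpow_succ, red hq hq1 hs hEF hKF hK'F hK'inv B hBF z w hEz hKz hK'z,
      ih a' x (by omega), mul_zero]

include hq hq1 hs hEF hKF hK'F hK'inv hBF in
lemma diag (z : M) (w : ℤ) (hEz : E z = 0)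
    (hKz : Kk z = (q ^ w * s) • z) (hK'z : Kk' z = (q ^ (-w) * s) • z) (x : M) :
    ∀ k : ℕ, B ((F ^ k) x) ((F ^ k) z) = Cp q w k * B x z := by
  intro k
  induction k with
  | zero => simp [Cp]
  | succ k ih =>
    have hCp : Cp q w (k+1)
        = Cp q w k * (q ^ (w - 2*(k:ℤ) - 1) * Qn q ((k:ℤ)+1) * Qn q (w - k)) := by
      rw [Cp, Finset.prod_range_succ, ← Cp]
    rw [show (F ^ (k+1)) x = F ((F ^ k) x) from Fpow_succ _ _,
      red hq hq1 hs hEF hKF hK'F hK'inv B hBF z w hEz hKz hK'z ((F ^ k) x) k, ih, hCp]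
    ring

end BLemmas

theorem polarization_string_orthogonality
    (di : ℕ) (hdi : 1 ≤ di) (s : KK) (hs : s ≠ 0) (h : ℤ)
    {M : Type*} [AddCommGroup M] [Module KK M]
    (E F Kk Kkinv Kk' Kk'inv : Module.End KK M)
    -- relations of U_{v,t}(g) for the fixed index i, with v_i = v^{d_i}
    (hEF : E * F - F * E = ((vv ^ di : KK) - (vv ^ di)⁻¹)⁻¹ • (Kk - Kk'))
    (hKE : Kk * E = ((vv ^ di : KK) ^ (2 : ℤ)) • (E * Kk))
    (hKF : Kk * F = ((vv ^ di : KK) ^ (-2 : ℤ)) • (F * Kk))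
    (hK'E : Kk' * E = ((vv ^ di : KK) ^ (-2 : ℤ)) • (E * Kk'))
    (hK'F : Kk' * F = ((vv ^ di : KK) ^ (2 : ℤ)) • (F * Kk'))
    (hKinv : Kkinv * Kk = 1 ∧ Kk * Kkinv = 1)
    (hK'inv : Kk'inv * Kk' = 1 ∧ Kk' * Kk'inv = 1)
    -- the polarization
    (B : M →ₗ[KK] M →ₗ[KK] KK)
    (hBsym : ∀ x y, B x y = B y x)
    (hBE : ∀ x y, B (E x) y = ((vv ^ di : KK))⁻¹ * B x (Kkinv (F y)))
    (hBF : ∀ x y, B (F x) y = ((vv ^ di : KK))⁻¹ * B x (Kk'inv (E y)))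
    -- x₀ ∈ Ker e_i ∩ M_{μ+(n+1)α_i}, y₀ ∈ Ker e_i ∩ M_{μ+mα_i}, with h = ⟨h_i,μ⟩
    (n m : ℕ) (x₀ y₀ : M)
    (hEx : E x₀ = 0) (hEy : E y₀ = 0)
    (hwtKx : Kk x₀ = ((vv ^ di : KK) ^ (h + 2 * (n + 1)) * s) • x₀)
    (hwtK'x : Kk' x₀ = ((vv ^ di : KK) ^ (-(h + 2 * (n + 1))) * s) • x₀)
    (hwtKy : Kk y₀ = ((vv ^ di : KK) ^ (h + 2 * m) * s) • y₀)
    (hwtK'y : Kk' y₀ = ((vv ^ di : KK) ^ (-(h + 2 * m)) * s) • y₀) :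
    -- the inner product formula (with divided powers f^{(k)} = F^k/[k]!)
    B ((qfac (vv ^ di) (n + 1))⁻¹ • (F ^ (n + 1)) x₀) ((qfac (vv ^ di) m)⁻¹ • (F ^ m) y₀)
      = (if n + 1 = m then 1 else 0) *
        ((vv ^ di : KK) ^ ((m : ℤ) * (h + m)) * gqbinom (vv ^ di) (h + 2 * m) m) * B x₀ y₀
    -- and, when ⟨h_i,μ⟩ + m ≥ m ≥ 0, the scalar lies in 1 + v·A
    ∧ (0 ≤ h → ∃ c ∈ Aset,
        (vv ^ di : KK) ^ ((m : ℤ) * (h + m)) * gqbinom (vv ^ di) (h + 2 * m) m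
          = 1 + vv * c) := by
  set q : KK := (vv : KK) ^ di with hqdef
  have hq : q ≠ 0 := pow_ne_zero _ vv_ne_zero
  have hq1 : ∀ e : ℤ, e ≠ 0 → q ^ e ≠ 1 := fun e he => q_zpow_ne_one hdi he
  constructor
  · -- main formula
    have hsmul : B ((qfac q (n + 1))⁻¹ • (F ^ (n + 1)) x₀) ((qfac q m)⁻¹ • (F ^ m) y₀)
        = (qfac q (n+1))⁻¹ * ((qfac q m)⁻¹ * B ((F ^ (n+1)) x₀) ((F ^ m) y₀)) := by
      simp only [map_smul, LinearMap.smul_apply, smul_eq_mul]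
      ring
    rw [hsmul]
    by_cases hnm : n + 1 = m
    · subst hnm
      rw [if_pos rfl, one_mul]
      have hdg := diag hq hq1 hs hEF hKF hK'F hK'inv.1 B hBF y₀
        (h + 2*(((n+1) : ℕ) : ℤ)) hEy hwtKy hwtK'y x₀ (n+1)
      rw [hdg, ← mul_assoc, ← mul_assoc,
        main_scalar hq hq1 (h + 2*(((n+1) : ℕ) : ℤ)) (n+1),
        show (((n+1):ℕ):ℤ) * ((h + 2*(((n+1):ℕ):ℤ)) - (((n+1):ℕ):ℤ))
          = (((n+1):ℕ):ℤ) * (h + (((n+1):ℕ):ℤ)) by push_cast; ring, mul_assoc]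
    · rw [if_neg hnm, zero_mul, zero_mul]
      have hz : B ((F ^ (n+1)) x₀) ((F ^ m) y₀) = 0 := by
        rcases Nat.lt_or_ge m (n+1) with hlt | hge
        · exact offdiag hq hq1 hs hEF hKF hK'F hK'inv.1 B hBF y₀ (h + 2*m) hEy
            hwtKy hwtK'y m (n+1) x₀ hlt
        · have hlt2 : n + 1 < m := by omega
          rw [hBsym]
          exact offdiag hq hq1 hs hEF hKF hK'F hK'inv.1 B hBF x₀ (h + 2*(n+1)) hEx
            hwtKx hwtK'x (n+1) m y₀ hlt2
      rw [hz, mul_zero, mul_zero]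
  · intro hh
    exact part2 di hdi h hh m
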